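/- Let S ∈ Σ^m, let R := subcl(S) with transition function δ_R(r,σ) := (the longest suffix of rσ lying in subcl(S)), and let D' be the reduced DAA built from R, δ_R and the BMH cost and shift functions (f_BMH, g_BMH). Then for every n ≥ 0 and every text T ∈ Σ^n, value_{D'}(T) equals the total cost of the window-based algorithm (f_BMH, g_BMH) on T (the number of text character accesses performed by the Boyer–Moore–Horspool algorithm when searching T for S), and D' has at most (m(m+1)/2 + 1)(m+1) states. -/

import Mathlib

/-- The longest suffix of `a` satisfying `p` (default `[]` if no suffix satisfies `p`). -/
def longestSuffixP {A : Type*} (p : List A → Prop) [DecidablePred p] (a : List A) : List A :=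
  (a.tails.filter fun t => decide (p t)).headD []

/-- Run of a DAA with additive natural-number values: from a state/value pair,
read the text character by character; on entering a state, add its emission. -/
def daaRun {A Q : Type*} (step : Q → A → Q) (emit : Q → ℕ) : Q × ℕ → List A → Q × ℕ
  | s, [] => s
  | (q, v), σ :: x => daaRun step emit (step q σ, v + emit (step q σ)) x

/-- Transition of the (full) DAA encoding a window-based algorithm with shift `g`:
states are pairs (window, count-down `k`); on reading `σ` in state `(w,k)` move to
`(w₁…w_{m-1}σ, k-1)` if `k > 0` and to `(w₁…w_{m-1}σ, g(w)-1)` if `k = 0`. -/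
def fullStep {A : Type*} (g : List A → ℕ) : (List A × ℕ) → A → (List A × ℕ) :=
  fun s σ => (s.1.tail ++ [σ], if 0 < s.2 then s.2 - 1 else g s.1 - 1)

/-- Emission of the (full) DAA encoding a window-based algorithm with cost `f`:
on entering `(w',k')`, add `f(w')` if `k' = 0` and `0` otherwise. -/
def fullEmit {A : Type*} (f : List A → ℕ) : (List A × ℕ) → ℕ :=
  fun s => if s.2 = 0 then f s.1 else 0

/-- `value_D(T)` for the DAA `D` encoding `(f,g)` with start state `(S,m)` and start value `0`. -/
def valueD {A : Type*} (f g : List A → ℕ) (S : List A) (m : ℕ) (T : List A) : ℕ :=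
  (daaRun (fullStep g) (fullEmit f) ((S, m), 0) T).2

/-- Total cost of the window-based algorithm `(f,g)` (auxiliary, fuelled version):
from window position `p`, as long as `p + m ≤ |T|`, pay `f` on the current window
`t_p … t_{p+m-1}` and shift by `g` of it. (Since shifts are ≥ 1, fuel `|T| + 1`
suffices to visit all window positions.) -/
def totalCostAux {A : Type*} (f g : List A → ℕ) (m : ℕ) (T : List A) : ℕ → ℕ → ℕ
  | 0, _ => 0
  | fuel + 1, p =>
    if p + m ≤ T.length then
      f ((T.drop p).take m) + totalCostAux f g m T fuel (p + g ((T.drop p).take m))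
    else 0

/-- Total cost (number of text character accesses) of the window-based pattern matching
algorithm specified by cost `f` and shift `g` on text `T` (window length `m`),
starting at window position `0`. -/
def totalCost {A : Type*} (f g : List A → ℕ) (m : ℕ) (T : List A) : ℕ :=
  totalCostAux f g m T (T.length + 1) 0

/-- Transition of the reduced DAA built from a representatives transition `δR` and lifted
shift `gR`: on reading `σ` in state `(r,k)` move to `(δR(r,σ), k-1)` if `k > 0` and to
`(δR(r,σ), gR(r)-1)` if `k = 0`. -/
def redStep {A : Type*} (δR : List A → A → List A) (gR : List A → ℕ) :
    (List A × ℕ) → A → (List A × ℕ) :=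
  fun s σ => (δR s.1 σ, if 0 < s.2 then s.2 - 1 else gR s.1 - 1)

/-- Emission of the reduced DAA with lifted cost `fR`: on entering `(r',k')`, add
`fR(r')` if `k' = 0` and `0` otherwise. -/
def redEmit {A : Type*} (fR : List A → ℕ) : (List A × ℕ) → ℕ :=
  fun s => if s.2 = 0 then fR s.1 else 0

/-- `rep_{subcl(S)}(a)`: the longest suffix of `a` lying in `subcl(S)`, the set of all
contiguous substrings of `S` (including the empty string), i.e. the longest suffix of `a`
that is an infix of `S`. -/
def repSub {A : Type*} [DecidableEq A] (S : List A) (a : List A) : List A :=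
  longestSuffixP (· <:+: S) a

open scoped Classical in
/-- `f_BM(w)` (= `f_BMH(w)`): the cost of window `w`, i.e. `m` if `w = S`, and otherwise the
least `i ∈ {1,…,m}` with `w_{m−i} ≠ s_{m−i}` (0-indexed; comparison from the right). -/
noncomputable def fBM {A : Type*} [Inhabited A] [DecidableEq A]
    (S : List A) (m : ℕ) (w : List A) : ℕ :=
  if w = S then m
  else sInf {i : ℕ | 1 ≤ i ∧ i ≤ m ∧ w.getI (m - i) ≠ S.getI (m - i)}

open scoped Classical in
/-- The bad-character rule `bc^S(w,i)`: `m−i+1` if `w_{m−i} ∉ {s_0,…,s_{m−i−1}}`,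
and otherwise the least `k ∈ {1,…,m−i}` with `w_{m−i} = s_{m−i−k}`. -/
noncomputable def bcBM {A : Type*} [Inhabited A] [DecidableEq A]
    (S : List A) (m : ℕ) (w : List A) (i : ℕ) : ℕ :=
  if ∃ j : ℕ, j + i < m ∧ S.getI j = w.getI (m - i) then
    sInf {k : ℕ | 1 ≤ k ∧ k ≤ m - i ∧ w.getI (m - i) = S.getI (m - i - k)}
  else m - i + 1

/-- `𝒮^S(w,i)`: the set of `k ∈ {0,…,m−i}` with `s_k…s_{k+i−2} = w_{m−i+1}…w_{m−1}` and
`s_{k−1} ≠ w_{m−i}` whenever `k ≥ 1`. -/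
def SBM {A : Type*} [Inhabited A] (S : List A) (m : ℕ) (w : List A) (i : ℕ) : Set ℕ :=
  {k : ℕ | k + i ≤ m ∧ (∀ j : ℕ, j + 1 < i → S.getI (k + j) = w.getI (m - i + 1 + j)) ∧
    (1 ≤ k → S.getI (k - 1) ≠ w.getI (m - i))}

/-- `𝒦^S(w,i)`: the set of `k ∈ {0,…,i−2}` with `s_0…s_k = w_{m−k−1}…w_{m−1}`. -/
def KBM {A : Type*} [Inhabited A] (S : List A) (m : ℕ) (w : List A) (i : ℕ) : Set ℕ :=
  {k : ℕ | k + 2 ≤ i ∧ ∀ j : ℕ, j ≤ k → S.getI j = w.getI (m - k - 1 + j)}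

open scoped Classical in
/-- The good-suffix rule `gs^S(w,i)`. -/
noncomputable def gsBM {A : Type*} [Inhabited A] (S : List A) (m : ℕ) (w : List A) (i : ℕ) : ℕ :=
  if (SBM S m w i).Nonempty then m - i - sSup (SBM S m w i) + 1
  else if (KBM S m w i).Nonempty then m - sSup (KBM S m w i) - 1
  else m

/-- The Boyer–Moore shift `g_BM(w) = max{bc^S(w, f_BM(w)), gs^S(w, f_BM(w))}`. -/
noncomputable def gBM {A : Type*} [Inhabited A] [DecidableEq A]
    (S : List A) (m : ℕ) (w : List A) : ℕ :=
  max (bcBM S m w (fBM S m w)) (gsBM S m w (fBM S m w))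

/-- The Boyer–Moore–Horspool cost `f_BMH = f_BM`. -/
noncomputable def fBMH {A : Type*} [Inhabited A] [DecidableEq A]
    (S : List A) (m : ℕ) (w : List A) : ℕ :=
  fBM S m w

/-- The Boyer–Moore–Horspool shift `g_BMH(w) = bc^S(w,1)`. -/
noncomputable def gBMH {A : Type*} [Inhabited A] [DecidableEq A]
    (S : List A) (m : ℕ) (w : List A) : ℕ :=
  bcBM S m w 1

/-!
The representative `repSub S a` is the longest suffix of `a` that is a factor of `S`. It is
compatible with reading a character, `rep (a σ) = rep (rep a σ)`, and since factors of `S` have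
length at most `m`, the representative of a string only depends on its last `m` characters.
So after reading `t_0 … t_{q-1}` from `rep S` the reduced DAA is in state
`rep (S t_0 … t_{q-1})`, which is the representative of the current window whenever the
counter reaches `0`: the DAA then emits `f_BMH` of that window and restarts its counter at
`g_BMH` of it, exactly as the window-based algorithm does. The number of states is bounded by
counting factors of `S`: the empty one and one for each pair of cut points `0 ≤ i < j ≤ m`.
-/

open List

section LongestSuffix

variable {A : Type*} (p : List A → Prop) [DecidablePred p]

@[simp]
theorem longestSuffixP_nil : longestSuffixP p [] = [] := by
  by_cases h : p [] <;> simp [longestSuffixP, h]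

theorem longestSuffixP_cons (x : A) (a : List A) :
    longestSuffixP p (x :: a) = if p (x :: a) then x :: a else longestSuffixP p a := by
  by_cases h : p (x :: a) <;> simp [longestSuffixP, h]

theorem longestSuffixP_suffix (a : List A) : longestSuffixP p a <:+ a := by
  induction a with
  | nil => simp
  | cons x a ih =>
    rw [longestSuffixP_cons]
    split_ifs
    · exact suffix_refl _
    · exact ih.trans (suffix_cons x a)

theorem longestSuffixP_spec (h : p []) (a : List A) : p (longestSuffixP p a) := by
  induction a with
  | nil => simpa using h
  | cons x a ih =>
    rw [longestSuffixP_cons]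
    split_ifs with hx
    exacts [hx, ih]

theorem List.IsSuffix.suffix_longestSuffixP {t a : List A} (ht : t <:+ a) (hp : p t) :
    t <:+ longestSuffixP p a := by
  induction a with
  | nil => simpa using ht
  | cons x a ih =>
    rw [longestSuffixP_cons]
    split_ifs with hx
    · exact ht
    · rcases suffix_cons_iff.1 ht with rfl | ht
      · exact absurd hp hx
      · exact ih ht

end LongestSuffix

section Representative

variable {A : Type*} [DecidableEq A] (S : List A)

theorem repSub_suffix (a : List A) : repSub S a <:+ a :=
  longestSuffixP_suffix _ a

theorem repSub_infix (a : List A) : repSub S a <:+: S :=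
  longestSuffixP_spec (· <:+: S) nil_infix a

variable {S} in
theorem List.IsSuffix.suffix_repSub {t a : List A} (ht : t <:+ a) (hS : t <:+: S) :
    t <:+ repSub S a :=
  ht.suffix_longestSuffixP (· <:+: S) hS

/-- This uses that a factor of a factor of `S` is again a factor of `S`. -/
theorem repSub_repSub_concat (a : List A) (σ : A) :
    repSub S (repSub S a ++ [σ]) = repSub S (a ++ [σ]) := by
  have hle : repSub S (repSub S a ++ [σ]) <:+ repSub S (a ++ [σ]) :=
    ((repSub_suffix S _).trans (suffix_append_self_iff.2 (repSub_suffix S a))).suffix_repSub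
      (repSub_infix S _)
  refine hle.eq_of_length_le (IsSuffix.length_le ?_)
  refine IsSuffix.suffix_repSub ?_ (repSub_infix S _)
  rcases suffix_concat_iff.1 (repSub_suffix S (a ++ [σ])) with h | ⟨t, ht, hta⟩
  · simp [h]
  · have htS : t <:+: S := (prefix_append t [σ]).isInfix.trans (ht ▸ repSub_infix S (a ++ [σ]))
    rw [ht]
    exact suffix_append_self_iff.2 (hta.suffix_repSub htS)

theorem repSub_eq_of_suffix {w c : List A} (hw : w <:+ c) (hl : S.length ≤ w.length) :
    repSub S c = repSub S w := by
  have hcw : repSub S c <:+ w :=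
    suffix_of_suffix_length_le (repSub_suffix S c) hw ((repSub_infix S c).length_le.trans hl)
  exact (hcw.suffix_repSub (repSub_infix S c)).eq_of_length_le
    (((repSub_suffix S w).trans hw).suffix_repSub (repSub_infix S w)).length_le

end Representative

section ReducedDAA

variable {A Q : Type*}

theorem daaRun_append (step : Q → A → Q) (emit : Q → ℕ) (s : Q × ℕ) (x y : List A) :
    daaRun step emit s (x ++ y) = daaRun step emit (daaRun step emit s x) y := by
  induction x generalizing s with
  | nil => rfl
  | cons σ x ih => exact ih _

variable {rep : List A → List A} {δR : List A → A → List A} {fR gR : List A → ℕ}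

local notation "run" => daaRun (redStep δR gR) (redEmit fR)

theorem daaRun_redStep_of_length_lt (hδ : ∀ c σ, δR (rep c) σ = rep (c ++ [σ]))
    {c x : List A} {k : ℕ} (v : ℕ) (hx : x.length < k) :
    run ((rep c, k), v) x = ((rep (c ++ x), k - x.length), v) := by
  induction x generalizing c k with
  | nil => simp [daaRun]
  | cons σ x ih =>
    simp only [length_cons] at hx
    have hstep : redStep δR gR (rep c, k) σ = (rep (c ++ [σ]), k - 1) := by
      simp [redStep, hδ, show 0 < k by omega]
    have hemit : redEmit fR (rep (c ++ [σ]), k - 1) = 0 := by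
      simp [redEmit, show k - 1 ≠ 0 by omega]
    rw [daaRun, hstep, hemit, Nat.add_zero, ih (by omega)]
    simp [Nat.sub_sub, Nat.add_comm]

theorem daaRun_redStep_of_length_eq (hδ : ∀ c σ, δR (rep c) σ = rep (c ++ [σ]))
    {c x : List A} {k : ℕ} (v : ℕ) (hk : 0 < k) (hx : x.length = k) :
    run ((rep c, k), v) x = ((rep (c ++ x), 0), v + fR (rep (c ++ x))) := by
  obtain ⟨y, σ, rfl⟩ := (eq_nil_or_concat x).resolve_left (by rintro rfl; simp at hx; omega)
  simp only [concat_eq_append, length_append, length_singleton] at hx ⊢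
  rw [daaRun_append, daaRun_redStep_of_length_lt hδ v (by omega)]
  simp [daaRun, redStep, redEmit, hδ, show k - y.length = 1 by omega]

theorem daaRun_redStep_zero {r : List A} (hg : 0 < gR r) (v : ℕ) (x : List A) :
    (run ((r, 0), v) x).2 = (run ((r, gR r), v) x).2 := by
  cases x with
  | nil => rfl
  | cons σ x => simp [daaRun, redStep, hg]

/-- Loop invariant: `q` characters of `T` have been read, and the window at position `p` is
complete after `k` more. -/
theorem daaRun_redStep_eq_totalCostAux (hδ : ∀ c σ, δR (rep c) σ = rep (c ++ [σ]))
    {m : ℕ} {f g : List A → ℕ} (hrep : ∀ c w, w <:+ c → w.length = m → rep c = rep w)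
    (hf : ∀ w : List A, w.length = m → fR (rep w) = f w)
    (hg : ∀ w : List A, w.length = m → gR (rep w) = g w)
    (hgpos : ∀ w : List A, w.length = m → 0 < g w) (T c : List A) (fuel : ℕ) :
    ∀ p q k v, 0 < k → q + k = p + m → q ≤ T.length → T.length < p + fuel →
      (run ((rep (c ++ T.take q), k), v) (T.drop q)).2 = v + totalCostAux f g m T fuel p := by
  induction fuel with
  | zero =>
    intro p q k v hk hqk hq hfuel
    rw [totalCostAux, daaRun_redStep_of_length_lt hδ v (by rw [length_drop]; omega)]
    rfl
  | succ fuel ih =>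
    intro p q k v hk hqk hq hfuel
    rw [totalCostAux]
    split_ifs with hp
    · set w := (T.drop p).take m
      have hw : w.length = m := by simp only [w, length_take, length_drop]; omega
      have hread : c ++ T.take q ++ (T.drop q).take k = c ++ T.take (p + m) := by
        rw [append_assoc, ← take_add, hqk]
      have hwin : rep (c ++ T.take (p + m)) = rep w :=
        hrep _ _ (by rw [take_add, ← append_assoc]; exact suffix_append _ _) hw
      have hgw : 0 < gR (rep (c ++ T.take (p + m))) := hwin ▸ hg w hw ▸ hgpos w hw
      rw [← take_append_drop k (T.drop q), daaRun_append,
        daaRun_redStep_of_length_eq hδ v hk (by simp only [length_take, length_drop]; omega),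
        hread, drop_drop, hqk, daaRun_redStep_zero hgw,
        ih (p + g w) (p + m) _ _ hgw (by rw [hwin, hg w hw]; omega)
          hp (by have := hgpos w hw; omega),
        hwin, hf w hw, Nat.add_assoc]
    · rw [daaRun_redStep_of_length_lt hδ v (by rw [length_drop]; omega), Nat.add_zero]

theorem daaRun_redStep_eq_totalCost (hδ : ∀ c σ, δR (rep c) σ = rep (c ++ [σ]))
    {m : ℕ} (hm : 0 < m) {f g : List A → ℕ}
    (hrep : ∀ c w, w <:+ c → w.length = m → rep c = rep w)
    (hf : ∀ w : List A, w.length = m → fR (rep w) = f w)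
    (hg : ∀ w : List A, w.length = m → gR (rep w) = g w)
    (hgpos : ∀ w : List A, w.length = m → 0 < g w) (c T : List A) :
    (run ((rep c, m), 0) T).2 = totalCost f g m T := by
  simpa [totalCost] using daaRun_redStep_eq_totalCostAux hδ hrep hf hg hgpos T c
    (T.length + 1) 0 0 m 0 hm (by simp) (Nat.zero_le _) (by simp)

end ReducedDAA

theorem one_le_bcBM {A : Type*} [Inhabited A] [DecidableEq A] (S : List A) (m : ℕ)
    (w : List A) (i : ℕ) : 1 ≤ bcBM S m w i := by
  unfold bcBM
  split_ifs with h
  · obtain ⟨j, hj, hSj⟩ := h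
    have hmem : m - i - j ∈ {k : ℕ | 1 ≤ k ∧ k ≤ m - i ∧ w.getI (m - i) = S.getI (m - i - k)} :=
      ⟨by omega, by omega, by rw [show m - i - (m - i - j) = j by omega, hSj]⟩
    exact (Nat.sInf_mem ⟨_, hmem⟩).1
  · omega

section Factors

/-- The pairs `⟨j, i⟩` with `i < j ≤ n`: cut points of the nonempty factors of a list of
length `n`. -/
def infixCuts (n : ℕ) : Finset ((_ : ℕ) × ℕ) :=
  (Finset.range (n + 1)).sigma Finset.range

theorem card_infixCuts (n : ℕ) : (infixCuts n).card = n * (n + 1) / 2 := by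
  simp only [infixCuts, Finset.card_sigma, Finset.card_range, Finset.sum_range_id,
    Nat.add_sub_cancel, Nat.mul_comm]

variable {α : Type*} (l : List α)

theorem List.setOf_infix_subset :
    {t | t <:+: l} ⊆
      insert [] ((fun p => (l.take p.1).drop p.2) '' (infixCuts l.length : Set ((_ : ℕ) × ℕ))) := by
  rintro t ⟨u, v, rfl⟩
  rcases eq_or_ne t [] with rfl | ht
  · exact Set.mem_insert _ _
  refine Set.mem_insert_of_mem _ ⟨⟨u.length + t.length, u.length⟩, ?_, ?_⟩
  · have := length_pos_iff.2 ht
    simp only [infixCuts, Finset.coe_sigma, Set.mem_sigma_iff, Finset.coe_range, Set.mem_Iio,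
      length_append]
    omega
  · dsimp only
    rw [← length_append, take_left, drop_left]

theorem List.finite_setOf_infix : {t | t <:+: l}.Finite :=
  (((infixCuts l.length).finite_toSet.image _).insert []).subset l.setOf_infix_subset

theorem List.ncard_setOf_infix_le :
    {t | t <:+: l}.ncard ≤ l.length * (l.length + 1) / 2 + 1 :=
  calc {t | t <:+: l}.ncard
      ≤ (insert [] ((fun p => (l.take p.1).drop p.2) ''
          (infixCuts l.length : Set ((_ : ℕ) × ℕ)))).ncard :=
        Set.ncard_le_ncard l.setOf_infix_subset
          (((infixCuts l.length).finite_toSet.image _).insert [])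
    _ ≤ (infixCuts l.length : Set ((_ : ℕ) × ℕ)).ncard + 1 :=
        (Set.ncard_insert_le _ _).trans
          (Nat.add_le_add_right (Set.ncard_image_le (Finset.finite_toSet _)) 1)
    _ = l.length * (l.length + 1) / 2 + 1 := by rw [Set.ncard_coe_finset, card_infixCuts]

end Factors

theorem reduced_BMH_daa_correct_and_small_general {A : Type*} [DecidableEq A] [Inhabited A]
    (m : ℕ) (hm : 1 ≤ m) (S : List A) (hS : S.length = m)
    (fR gR : List A → ℕ)
    (hfR : ∀ a : List A, a.length = m → fR (repSub S a) = fBMH S m a)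
    (hgR : ∀ a : List A, a.length = m → gR (repSub S a) = gBMH S m a)
    (T : List A) :
    (daaRun (redStep (fun r σ => repSub S (r ++ [σ])) gR) (redEmit fR)
        ((repSub S S, m), 0) T).2
      = totalCost (fBMH S m) (gBMH S m) m T
    ∧ {t : List A | t <:+: S}.Finite
    ∧ ({t : List A | t <:+: S} ×ˢ Set.Iic m).ncard ≤ (m * (m + 1) / 2 + 1) * (m + 1) := by
  refine ⟨?_, S.finite_setOf_infix, ?_⟩
  · exact daaRun_redStep_eq_totalCost (repSub_repSub_concat S) hm
      (fun c w hw hl => repSub_eq_of_suffix S hw (hS.trans hl.symm).le) hfR hgR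
      (fun w _ => one_le_bcBM S m w 1) S T
  · rw [Set.ncard_prod, ← Finset.coe_Iic, Set.ncard_coe_finset, Nat.card_Iic, ← hS]
    exact Nat.mul_le_mul_right _ S.ncard_setOf_infix_le

/-- Let `S ∈ Σ^m`, let `R := subcl(S)` with transition function
`δ_R(r,σ) := `(the longest suffix of `rσ` lying in `subcl(S)`), and let `D'` be the reduced
DAA built from `R`, `δ_R` and the BMH cost and shift functions `(f_BMH, g_BMH)` (via any
liftings `fR`, `gR` to representatives — the values on representatives not of the form
`rep_{subcl(S)}(a)` are immaterial). Then for every text `T ∈ Σ*`, `value_{D'}(T)` equals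
the total cost of the window-based algorithm `(f_BMH, g_BMH)` on `T` (the number of text
character accesses performed by the Boyer–Moore–Horspool algorithm when searching `T` for
`S`), and `D'` has at most `(m(m+1)/2 + 1)(m+1)` states. -/
theorem reduced_BMH_daa_correct_and_small {A : Type*} [Fintype A] [DecidableEq A] [Inhabited A]
    (m : ℕ) (hm : 1 ≤ m) (S : List A) (hS : S.length = m)
    (fR gR : List A → ℕ)
    (hfR : ∀ a : List A, a.length = m → fR (repSub S a) = fBMH S m a)
    (hgR : ∀ a : List A, a.length = m → gR (repSub S a) = gBMH S m a)
    (T : List A) :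
    (daaRun (redStep (fun r σ => repSub S (r ++ [σ])) gR) (redEmit fR)
        ((repSub S S, m), 0) T).2
      = totalCost (fBMH S m) (gBMH S m) m T
    ∧ {t : List A | t <:+: S}.Finite
    ∧ ({t : List A | t <:+: S} ×ˢ Set.Iic m).ncard ≤ (m * (m + 1) / 2 + 1) * (m + 1) :=
  reduced_BMH_daa_correct_and_small_general m hm S hS fR gR hfR hgR T
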